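/- arXiv:1605.04362 — 8 statements merged into one kernel-verified Lean document; each statement's English description precedes it below -/
import Mathlib

section
/- The equivalence relation on Darboux transformations is compatible with composition: if NL = L₁M, N₁L₁ = L₂M₁, and A, B are arbitrary operators, then setting C = BN + BL₁A + M₁A, one has (N₁ + L₂B)(N + L₁A) = N₁N + L₂C and (M₁ + BL₁)(M + AL) = M₁M + CL. Hence the composition of the modified pairs is equivalent to the composition (M₁M, N₁N). -/
theorem equiv_compatible_with_composition {R : Type*} [Ring R]
    (L L₁ L₂ M N M₁ N₁ A B : R)
    (h : N * L = L₁ * M) (h₁ : N₁ * L₁ = L₂ * M₁) :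
    (N₁ + L₂ * B) * (N + L₁ * A) = N₁ * N + L₂ * (B * N + B * L₁ * A + M₁ * A) ∧
    (M₁ + B * L₁) * (M + A * L) = M₁ * M + (B * N + B * L₁ * A + M₁ * A) * L := by
  constructor
  · have e : N₁ * (L₁ * A) = L₂ * (M₁ * A) := by rw [← mul_assoc, h₁, mul_assoc]
    noncomm_ring
    rw [e]
    abel
  · have e : B * (L₁ * M) = B * (N * L) := by rw [h]
    noncomm_ring
    rw [e]
    abel
end

section
/- In a ring without zero divisors, suppose NL = L₁M, N'L₁ = LM', N'N = 1 + LA and NN' = 1 + L₁B. Then BN = MA. -/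
theorem BN_eq_MA {R : Type*} [Ring R] [NoZeroDivisors R]
    (L L₁ M N M' N' A B : R) (hL₁ : L₁ ≠ 0)
    (h : N * L = L₁ * M) (h' : N' * L₁ = L * M')
    (hN : N' * N = 1 + L * A) (hN' : N * N' = 1 + L₁ * B) :
    B * N = M * A := by
  have key : L₁ * (B * N) = L₁ * (M * A) := by
    calc L₁ * (B * N) = (N * N' - 1) * N := by rw [hN']; noncomm_ring
    _ = N * (N' * N) - N := by noncomm_ring
    _ = N * L * A := by rw [hN]; noncomm_ring
    _ = L₁ * (M * A) := by rw [h]; noncomm_ring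
  exact mul_left_cancel₀ hL₁ key
end

section
/- Shifts of Darboux transformations preserve invertibility: suppose NL = L₁M, N'L₁ = LM', M'M = 1 + AL, MM' = 1 + BL₁, N'N = 1 + LA, NN' = 1 + L₁B, and BN = MA. Then for any C, setting L̃ = L + CM, L̃₁ = L₁ + NC, M̃' = M' + AC, Ñ' = N' + CB, one has Ñ'L̃₁ = L̃M̃', M̃'M = 1 + AL̃, and MM̃' = 1 + BL̃₁. -/
theorem shift_preserves_invertibility {R : Type*} [Ring R]
    (L L₁ M N M' N' A B C : R)
    (h : N * L = L₁ * M) (h' : N' * L₁ = L * M')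
    (h1 : M' * M = 1 + A * L) (h2 : M * M' = 1 + B * L₁)
    (h3 : N' * N = 1 + L * A) (h4 : N * N' = 1 + L₁ * B)
    (h5 : B * N = M * A) :
    (N' + C * B) * (L₁ + N * C) = (L + C * M) * (M' + A * C) ∧
    (M' + A * C) * M = 1 + A * (L + C * M) ∧
    M * (M' + A * C) = 1 + B * (L₁ + N * C) := by
  refine ⟨?_, ?_, ?_⟩
  · have e1 : N' * (N * C) = (1 + L * A) * C := by rw [← mul_assoc, h3]
    have e2 : (C * B) * L₁ = C * (M * M' - 1) := by
      rw [h2]; noncomm_ring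
    have e3 : (C * B) * (N * C) = C * (M * A) * C := by
      rw [show (C * B) * (N * C) = C * (B * N) * C by noncomm_ring, h5]
    calc (N' + C * B) * (L₁ + N * C)
        = N' * L₁ + N' * (N * C) + (C * B) * L₁ + (C * B) * (N * C) := by noncomm_ring
      _ = L * M' + (1 + L * A) * C + C * (M * M' - 1) + C * (M * A) * C := by
          rw [h', e1, e2, e3]
      _ = (L + C * M) * (M' + A * C) := by noncomm_ring
  · calc (M' + A * C) * M = M' * M + A * (C * M) := by noncomm_ring
      _ = 1 + A * L + A * (C * M) := by rw [h1]
      _ = 1 + A * (L + C * M) := by noncomm_ring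
  · calc M * (M' + A * C) = M * M' + (M * A) * C := by noncomm_ring
      _ = M * M' + (B * N) * C := by rw [h5]
      _ = 1 + B * L₁ + B * (N * C) := by rw [h2]; noncomm_ring
      _ = 1 + B * (L₁ + N * C) := by noncomm_ring
end

section
/- The dual of an invertible Darboux transformation is invertible: suppose NL = L₁M, N'L₁ = LM', M'M = 1 + AL, MM' = 1 + BL₁, N'N = 1 + LA, NN' = 1 + L₁B, and BN = MA. Then for the dual transformation (L,L₁): M → N (satisfying L₁M = NL), the pair (-A, -B) is an inverse: (-B)N = M(-A), (-A)L = 1 + (-M')M, and L(-A) = 1 + (-N')N. -/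
theorem dual_of_invertible_is_invertible {R : Type*} [Ring R]
    (L L₁ M N M' N' A B : R)
    (h : N * L = L₁ * M) (h' : N' * L₁ = L * M')
    (h1 : M' * M = 1 + A * L) (h2 : M * M' = 1 + B * L₁)
    (h3 : N' * N = 1 + L * A) (h4 : N * N' = 1 + L₁ * B)
    (h5 : B * N = M * A) :
    (-B) * N = M * (-A) ∧ (-A) * L = 1 + (-M') * M ∧ L * (-A) = 1 + (-N') * N := by
  refine ⟨?_, ?_, ?_⟩
  · rw [neg_mul, h5, mul_neg]
  · rw [neg_mul, neg_mul, h1]; abel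
  · rw [mul_neg, neg_mul, h3]; abel
end

section
/- Continued Type I intertwining relation: let M₀ = L, M₁, …, M_{k+1} and A₁, …, A_k be elements of a ring with M_{i-1} = A_iM_i + M_{i+1} for 1 ≤ i ≤ k, where M_{k+1} = f is invertible. Define N_{k+1} = f, N_k = fM_kf⁻¹, and N_i = N_{i+1}A_{i+1} + N_{i+2} for 0 ≤ i ≤ k-1. Then N_iM_{i-1} = N_{i-1}M_i for all 1 ≤ i ≤ k+1; in particular, with N = N₁ and L₁ = N₀, one has NL = L₁M₁. -/
theorem continued_typeI_intertwining {R : Type*} [Ring R]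
    (k : ℕ) (hk : 1 ≤ k) (A M N : ℕ → R) (g : R)
    (hfg : M (k+1) * g = 1) (hgf : g * M (k+1) = 1)
    (hM : ∀ i, i < k → M i = A (i+1) * M (i+1) + M (i+2))
    (hNtop : N (k+1) = M (k+1))
    (hNk : N k = M (k+1) * M k * g)
    (hN : ∀ i, i < k → N i = N (i+1) * A (i+1) + N (i+2)) :
    (∀ i, i ≤ k → N (i+1) * M i = N i * M (i+1)) ∧
    N 1 * M 0 = N 0 * M 1 := by
  have main : ∀ j i, i ≤ k → k - i = j → N (i+1) * M i = N i * M (i+1) := by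
    intro j
    induction j with
    | zero =>
      intro i hi hji
      have : i = k := by omega
      subst this
      rw [hNtop, hNk, mul_assoc, mul_assoc, hgf, mul_one]
    | succ j ih =>
      intro i hi hji
      have hik : i < k := by omega
      have prev : N (i+2) * M (i+1) = N (i+1) * M (i+2) :=
        ih (i+1) (by omega) (by omega)
      rw [hM i hik, hN i hik, mul_add, add_mul, prev, mul_assoc]
  have h1 : ∀ i, i ≤ k → N (i+1) * M i = N i * M (i+1) := fun i hi =>
    main (k - i) i hi rfl
  exact ⟨h1, by
    have := h1 0 (by omega)
    simpa using this⟩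
end

section
/- Reversed-product identity: define sequences P_i, P'_i in a ring by P₀ = P'₀ = 1, P₁ = P'₁ = A₁, and P_{i+1} = P_iA_{i+1} + P_{i-1}, P'_{i+1} = A_{i+1}P'_i + P'_{i-1} for i ≥ 1. Then P_iP'_{i+1} = P_{i+1}P'_i for all i ≥ 0. -/
theorem reversed_product_identity {R : Type*} [Ring R]
    (A P P' : ℕ → R)
    (hP0 : P 0 = 1) (hP'0 : P' 0 = 1) (hP1 : P 1 = A 1) (hP'1 : P' 1 = A 1)
    (hP : ∀ i, 1 ≤ i → P (i+1) = P i * A (i+1) + P (i-1))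
    (hP' : ∀ i, 1 ≤ i → P' (i+1) = A (i+1) * P' i + P' (i-1)) :
    ∀ i, P i * P' (i+1) = P (i+1) * P' i := by
  intro i
  induction i with
  | zero => rw [hP0, hP'0, hP1, hP'1, one_mul, mul_one]
  | succ n ih =>
    rw [hP (n+1) (by omega), hP' (n+1) (by omega)]
    simp only [Nat.add_sub_cancel]
    rw [mul_add, add_mul, ← mul_assoc, ← ih]
end

section
/- Determinant-type identities for noncommutative continuants: define R₁ = R'₁ = 1, R₂ = R'₂ = A₂, R_{i+1} = R_iA_{i+1} + R_{i-1}, R'_{i+1} = A_{i+1}R'_i + R'_{i-1} for i ≥ 2, and P₀ = P'₀ = 1, P₁ = P'₁ = A₁, P_{i+1} = P_iA_{i+1} + P_{i-1}, P'_{i+1} = A_{i+1}P'_i + P'_{i-1}. Then for all 2 ≤ i: (a) P'_iR_i = R'_iP_i, (b) P'_iR_{i-1} = R'_iP_{i-1} + (-1)^i, and (c) R'_{i-1}P_i = P'_{i-1}R_i + (-1)^i. -/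
private theorem cd_key {R : Type*} [Ring R] (a pi p'i pi1 p'i1 qi q'i qi1 q'i1 e : R)
    (he : ∀ x, e * x = x * e)
    (ha : p'i * qi = q'i * pi) (hb : p'i * qi1 = q'i * pi1 + e)
    (hc : q'i1 * pi = p'i1 * qi + e) (hd : p'i1 * qi1 = q'i1 * pi1) :
    (a * p'i + p'i1) * (qi * a + qi1) = (a * q'i + q'i1) * (pi * a + pi1) := by
  have hc' : p'i1 * qi = q'i1 * pi - e := by rw [hc]; abel
  rw [add_mul, add_mul, mul_add, mul_add, mul_add, mul_add,
      mul_assoc a p'i (qi * a), ← mul_assoc p'i qi a, ha,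
      mul_assoc a p'i qi1, hb, ← mul_assoc p'i1 qi a, hc', hd,
      mul_assoc a q'i (pi * a), ← mul_assoc q'i pi a]
  rw [mul_add, sub_mul, he a]
  noncomm_ring

theorem continuant_determinant_identities {R : Type*} [Ring R]
    (A P P' Q Q' : ℕ → R)
    (hP0 : P 0 = 1) (hP'0 : P' 0 = 1) (hP1 : P 1 = A 1) (hP'1 : P' 1 = A 1)
    (hP : ∀ i, 1 ≤ i → P (i+1) = P i * A (i+1) + P (i-1))
    (hP' : ∀ i, 1 ≤ i → P' (i+1) = A (i+1) * P' i + P' (i-1))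
    (hQ1 : Q 1 = 1) (hQ'1 : Q' 1 = 1) (hQ2 : Q 2 = A 2) (hQ'2 : Q' 2 = A 2)
    (hQ : ∀ i, 2 ≤ i → Q (i+1) = Q i * A (i+1) + Q (i-1))
    (hQ' : ∀ i, 2 ≤ i → Q' (i+1) = A (i+1) * Q' i + Q' (i-1)) :
    ∀ i, 2 ≤ i →
      P' i * Q i = Q' i * P i ∧
      P' i * Q (i-1) = Q' i * P (i-1) + (-1 : R) ^ i ∧
      Q' (i-1) * P i = P' (i-1) * Q i + (-1 : R) ^ i := by
  suffices h : ∀ i, 2 ≤ i →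
      (P' (i-1) * Q (i-1) = Q' (i-1) * P (i-1)) ∧
      P' i * Q i = Q' i * P i ∧
      P' i * Q (i-1) = Q' i * P (i-1) + (-1 : R) ^ i ∧
      Q' (i-1) * P i = P' (i-1) * Q i + (-1 : R) ^ i by
    intro i hi
    exact ⟨(h i hi).2.1, (h i hi).2.2.1, (h i hi).2.2.2⟩
  have he : ∀ (i : ℕ) (x : R), (-1 : R) ^ i * x = x * (-1 : R) ^ i := fun i x =>
    (((Commute.one_left x).neg_left).pow_left i).eq
  intro i hi
  induction i, hi using Nat.le_induction with
  | base =>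
    have h2 : P 2 = P 1 * A 2 + P 0 := hP 1 le_rfl
    have h2' : P' 2 = A 2 * P' 1 + P' 0 := hP' 1 le_rfl
    simp only [h2, h2', hP0, hP'0, hP1, hP'1, hQ1, hQ'1, hQ2, hQ'2]
    refine ⟨by noncomm_ring, by noncomm_ring, by noncomm_ring, by noncomm_ring⟩
  | succ i hi ih =>
    obtain ⟨hd, ha, hb, hc⟩ := ih
    have hi1 : 1 ≤ i := le_trans (by norm_num) hi
    have e1 : i + 1 - 1 = i := rfl
    have e2 : (-1 : R) ^ (i+1) = -((-1:R)^i) := by rw [pow_succ, mul_neg_one]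
    have hd' : P' (i-1) * Q (i-1) = Q' (i-1) * P (i-1) := hd
    rw [e1, hP i hi1, hP' i hi1, hQ i hi, hQ' i hi, e2]
    refine ⟨ha, cd_key _ _ _ _ _ _ _ _ _ _ (he i) ha hb hc hd', ?_, ?_⟩
    · have hc' : P' (i-1) * Q i = Q' (i-1) * P i - (-1:R)^i := by rw [hc]; abel
      rw [add_mul, add_mul, mul_assoc, ha, hc', ← mul_assoc]
      abel
    · rw [mul_add, mul_add, ← mul_assoc, ← mul_assoc, ha, hb]
      abel
end

section
/- Invertibility of continued Type I Darboux transformations: with M_{i-1} = A_iM_i + M_{i+1} (1 ≤ i ≤ k), M_{k+1} = f invertible, N_{k+1} = f, N_k = fM_kf⁻¹, N_i = N_{i+1}A_{i+1} + N_{i+2}, L = M₀, M = M₁, N = N₁, L₁ = N₀, and with continuant sequences P_i, P'_i, R_i, R'_i defined by P₀ = P'₀ = 1, P₁ = P'₁ = A₁, P_{i+1} = P_iA_{i+1} + P_{i-1}, P'_{i+1} = A_{i+1}P'_i + P'_{i-1}, R₁ = R'₁ = 1, R₂ = R'₂ = A₂, R_{i+1} = R_iA_{i+1} + R_{i-1},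 R'_{i+1} = A_{i+1}R'_i + R'_{i-1}: setting N' = (-1)^k P_k f⁻¹ and M' = (-1)^k f⁻¹ P'_k, one has N'L₁ = LM', M'M = 1 + ((-1)^k f⁻¹ R'_k)L, and MM' = 1 + ((-1)^k R_k f⁻¹)L₁. Hence the continued Type I transformation (M,N): L → L₁ is invertible. -/
theorem continued_typeI_invertible {R : Type*} [Ring R]
    (k : ℕ) (hk : 2 ≤ k) (A M N P P' Q Q' : ℕ → R) (g : R)
    (hfg : M (k+1) * g = 1) (hgf : g * M (k+1) = 1)
    (hM : ∀ i, i < k → M i = A (i+1) * M (i+1) + M (i+2))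
    (hNtop : N (k+1) = M (k+1))
    (hNk : N k = M (k+1) * M k * g)
    (hN : ∀ i, i < k → N i = N (i+1) * A (i+1) + N (i+2))
    (hP0 : P 0 = 1) (hP'0 : P' 0 = 1) (hP1 : P 1 = A 1) (hP'1 : P' 1 = A 1)
    (hP : ∀ i, 1 ≤ i → P (i+1) = P i * A (i+1) + P (i-1))
    (hP' : ∀ i, 1 ≤ i → P' (i+1) = A (i+1) * P' i + P' (i-1))
    (hQ1 : Q 1 = 1) (hQ'1 : Q' 1 = 1) (hQ2 : Q 2 = A 2) (hQ'2 : Q' 2 = A 2)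
    (hQ : ∀ i, 2 ≤ i → Q (i+1) = Q i * A (i+1) + Q (i-1))
    (hQ' : ∀ i, 2 ≤ i → Q' (i+1) = A (i+1) * Q' i + Q' (i-1)) :
    ((-1 : R) ^ k * P k * g) * N 0 = M 0 * ((-1 : R) ^ k * g * P' k) ∧
    ((-1 : R) ^ k * g * P' k) * M 1 = 1 + ((-1 : R) ^ k * g * Q' k) * M 0 ∧
    M 1 * ((-1 : R) ^ k * g * P' k) = 1 + ((-1 : R) ^ k * Q k * g) * N 0 := by
  -- auxiliary values of the continuants at index 2
  have hP2 : P 2 = A 1 * A 2 + 1 := by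
    have h := hP 1 le_rfl
    simp only [hP1, hP0] at h
    simpa using h
  have hP'2 : P' 2 = A 2 * A 1 + 1 := by
    have h := hP' 1 le_rfl
    simp only [hP'1, hP'0] at h
    simpa using h
  -- the key continuant identities, by simultaneous induction
  have key : ∀ i, 2 ≤ i →
      (P' i * Q i - Q' i * P i = 0) ∧
      (P' i * Q (i-1) - Q' i * P (i-1) = (-1:R)^i) ∧
      (P' (i-1) * Q i - Q' (i-1) * P i = -(-1:R)^i) ∧
      (Q (i-1) * P' i - Q i * P' (i-1) = (-1:R)^i) ∧
      (P' (i-1) * Q (i-1) - Q' (i-1) * P (i-1) = 0) := by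
    intro i hi
    induction i, hi using Nat.le_induction with
    | base =>
      simp only [show (2:ℕ) - 1 = 1 from rfl]
      refine ⟨?_, ?_, ?_, ?_, ?_⟩
      · rw [hP'2, hP2, hQ2, hQ'2]; noncomm_ring
      · rw [hP'2, hQ1, hQ'2, hP1]; noncomm_ring
      · rw [hP'1, hQ2, hQ'1, hP2]; noncomm_ring
      · rw [hQ1, hP'2, hQ2, hP'1]; noncomm_ring
      · rw [hP'1, hQ1, hQ'1, hP1]; noncomm_ring
    | succ i hi ih =>
      obtain ⟨ih1, ih2, ih3, ih4, ih5⟩ := ih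
      have hi1 : 1 ≤ i := by omega
      have rP := hP i hi1
      have rP' := hP' i hi1
      have rQ := hQ i hi
      have rQ' := hQ' i hi
      have hpow : (-1:R)^(i+1) = -(-1:R)^i := by rw [pow_succ, mul_neg_one]
      have hc : A (i+1) * (-1:R)^i = (-1:R)^i * A (i+1) :=
        (((Commute.neg_one_left (A (i+1))).pow_left i).eq).symm
      simp only [Nat.add_sub_cancel]
      refine ⟨?_, ?_, ?_, ?_, ih1⟩
      · have hsub1 : P' (i+1) * Q (i+1) - Q' (i+1) * P (i+1)
            = A (i+1) * (P' i * Q i - Q' i * P i) * A (i+1)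
              + A (i+1) * (P' i * Q (i-1) - Q' i * P (i-1))
              + (P' (i-1) * Q i - Q' (i-1) * P i) * A (i+1)
              + (P' (i-1) * Q (i-1) - Q' (i-1) * P (i-1)) := by
          rw [rP, rP', rQ, rQ']; noncomm_ring
        rw [hsub1, ih1, ih2, ih3, ih5, hc]
        noncomm_ring
      · have hsub2 : P' (i+1) * Q i - Q' (i+1) * P i
            = A (i+1) * (P' i * Q i - Q' i * P i)
              + (P' (i-1) * Q i - Q' (i-1) * P i) := by
          rw [rP', rQ']; noncomm_ring
        rw [hsub2, ih1, ih3, hpow]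
        noncomm_ring
      · have hsub3 : P' i * Q (i+1) - Q' i * P (i+1)
            = (P' i * Q i - Q' i * P i) * A (i+1)
              + (P' i * Q (i-1) - Q' i * P (i-1)) := by
          rw [rP, rQ]; noncomm_ring
        rw [hsub3, ih1, ih2, hpow]
        noncomm_ring
      · have hsub4 : Q i * P' (i+1) - Q (i+1) * P' i
            = -(Q (i-1) * P' i - Q i * P' (i-1)) := by
          rw [rP', rQ]; noncomm_ring
        rw [hsub4, ih4, hpow]
  -- the "palindrome" identity P_i P'_{i-1} = P_{i-1} P'_i
  have hI1 : ∀ i, 1 ≤ i → P i * P' (i-1) = P (i-1) * P' i := by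
    intro i hi
    induction i, hi using Nat.le_induction with
    | base => simp [hP1, hP'1, hP0, hP'0]
    | succ i hi ih =>
      simp only [Nat.add_sub_cancel] at ih ⊢
      calc P (i+1) * P' i = (P i * A (i+1) + P (i-1)) * P' i := by rw [hP i hi]
        _ = P i * (A (i+1) * P' i) + P (i-1) * P' i := by noncomm_ring
        _ = P i * (A (i+1) * P' i) + P i * P' (i-1) := by rw [← ih]
        _ = P i * (A (i+1) * P' i + P' (i-1)) := by noncomm_ring
        _ = P i * P' (i+1) := by rw [hP' i hi]
  -- expansion of M 0 along the recursion
  have hM0e : ∀ i, 1 ≤ i → i ≤ k → M 0 = P i * M i + P (i-1) * M (i+1) := by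
    intro i hi
    induction i, hi using Nat.le_induction with
    | base =>
      intro _
      simpa [hP1, hP0] using hM 0 (by omega)
    | succ i hi ih =>
      intro hik
      simp only [Nat.add_sub_cancel]
      calc M 0 = P i * M i + P (i-1) * M (i+1) := ih (by omega)
        _ = P i * (A (i+1) * M (i+1) + M (i+2)) + P (i-1) * M (i+1) := by
            rw [← hM i (by omega)]
        _ = (P i * A (i+1) + P (i-1)) * M (i+1) + P i * M (i+2) := by noncomm_ring
        _ = P (i+1) * M (i+1) + P i * M (i+2) := by rw [hP i hi]
  -- expansion of M 1 along the recursion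
  have hM1e : ∀ i, 2 ≤ i → i ≤ k → M 1 = Q i * M i + Q (i-1) * M (i+1) := by
    intro i hi
    induction i, hi using Nat.le_induction with
    | base =>
      intro _
      simpa [hQ2, hQ1] using hM 1 (by omega)
    | succ i hi ih =>
      intro hik
      simp only [Nat.add_sub_cancel]
      calc M 1 = Q i * M i + Q (i-1) * M (i+1) := ih (by omega)
        _ = Q i * (A (i+1) * M (i+1) + M (i+2)) + Q (i-1) * M (i+1) := by
            rw [← hM i (by omega)]
        _ = (Q i * A (i+1) + Q (i-1)) * M (i+1) + Q i * M (i+2) := by noncomm_ring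
        _ = Q (i+1) * M (i+1) + Q i * M (i+2) := by rw [hQ i hi]
  -- expansion of N 0 along the recursion
  have hN0e : ∀ i, 1 ≤ i → i ≤ k → N 0 = N i * P' i + N (i+1) * P' (i-1) := by
    intro i hi
    induction i, hi using Nat.le_induction with
    | base =>
      intro _
      simpa [hP'1, hP'0] using hN 0 (by omega)
    | succ i hi ih =>
      intro hik
      simp only [Nat.add_sub_cancel]
      calc N 0 = N i * P' i + N (i+1) * P' (i-1) := ih (by omega)
        _ = (N (i+1) * A (i+1) + N (i+2)) * P' i + N (i+1) * P' (i-1) := by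
            rw [← hN i (by omega)]
        _ = N (i+1) * (A (i+1) * P' i + P' (i-1)) + N (i+2) * P' i := by noncomm_ring
        _ = N (i+1) * P' (i+1) + N (i+2) * P' i := by rw [hP' i hi]
  -- specializations at i = k
  have hk1 : 1 ≤ k := by omega
  have eM0 := hM0e k hk1 le_rfl
  have eM1 := hM1e k hk le_rfl
  have eN0 : N 0 = M (k+1) * M k * g * P' k + M (k+1) * P' (k-1) := by
    rw [hN0e k hk1 le_rfl, hNk, hNtop]
  obtain ⟨c1k, c2k, c3k, c4k, c5k⟩ := key k hk
  have hI1k := hI1 k hk1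
  -- basic facts about the sign ε = (-1)^k
  have hεc : ∀ x : R, (-1:R)^k * x = x * (-1:R)^k := fun x =>
    ((Commute.neg_one_left x).pow_left k).eq
  have hε2 : (-1:R)^k * (-1:R)^k = 1 := by
    rw [← pow_add]; exact Even.neg_one_pow ⟨k, rfl⟩
  have hmove : ∀ x y : R, x * ((-1:R)^k * y) = (-1:R)^k * (x * y) := fun x y => by
    rw [← mul_assoc, ← hεc x, mul_assoc]
  have hfP' : M (k+1) * (g * P' k) = P' k := by rw [← mul_assoc, hfg, one_mul]
  -- the three goals
  refine ⟨?_, ?_, ?_⟩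
  · -- N' L₁ = L M'
    have core1 : M 0 * (g * P' k) = P k * (M k * (g * P' k)) + P (k-1) * P' k := by
      rw [eM0]
      calc (P k * M k + P (k-1) * M (k+1)) * (g * P' k)
          = P k * (M k * (g * P' k)) + P (k-1) * (M (k+1) * (g * P' k)) := by noncomm_ring
        _ = P k * (M k * (g * P' k)) + P (k-1) * P' k := by rw [hfP']
    have core2 : P k * (g * N 0) = P k * (M k * (g * P' k)) + P (k-1) * P' k := by
      rw [eN0]
      calc P k * (g * (M (k+1) * M k * g * P' k + M (k+1) * P' (k-1)))
          = P k * ((g * M (k+1)) * (M k * (g * P' k)))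
            + P k * ((g * M (k+1)) * P' (k-1)) := by noncomm_ring
        _ = P k * (M k * (g * P' k)) + P k * P' (k-1) := by rw [hgf, one_mul, one_mul]
        _ = P k * (M k * (g * P' k)) + P (k-1) * P' k := by rw [hI1k]
    calc ((-1:R)^k * P k * g) * N 0
        = (-1:R)^k * (P k * (g * N 0)) := by noncomm_ring
      _ = (-1:R)^k * (M 0 * (g * P' k)) := by rw [core2, ← core1]
      _ = M 0 * ((-1:R)^k * g * P' k) := by
          rw [← mul_assoc, hεc (M 0)]; noncomm_ring
  · -- M' M = 1 + (something) L
    have h21 : P' k * M 1 = Q' k * (P k * M k + P (k-1) * M (k+1)) + (-1:R)^k * M (k+1) := by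
      rw [eM1]
      calc P' k * (Q k * M k + Q (k-1) * M (k+1))
          = (P' k * Q k - Q' k * P k) * M k
            + (P' k * Q (k-1) - Q' k * P (k-1)) * M (k+1)
            + Q' k * (P k * M k + P (k-1) * M (k+1)) := by noncomm_ring
        _ = 0 * M k + (-1:R)^k * M (k+1)
            + Q' k * (P k * M k + P (k-1) * M (k+1)) := by rw [c1k, c2k]
        _ = Q' k * (P k * M k + P (k-1) * M (k+1)) + (-1:R)^k * M (k+1) := by noncomm_ring
    have h21' : P' k * M 1 = Q' k * M 0 + (-1:R)^k * M (k+1) := by rw [h21, ← eM0]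
    have h22 : (-1:R)^k * (g * ((-1:R)^k * M (k+1))) = 1 := by
      rw [← mul_assoc, hεc g, mul_assoc, ← mul_assoc ((-1:R)^k), hε2, one_mul, hgf]
    calc ((-1:R)^k * g * P' k) * M 1
        = (-1:R)^k * (g * (P' k * M 1)) := by noncomm_ring
      _ = (-1:R)^k * (g * (Q' k * M 0)) + (-1:R)^k * (g * ((-1:R)^k * M (k+1))) := by
          rw [h21']; noncomm_ring
      _ = 1 + ((-1:R)^k * g * Q' k) * M 0 := by rw [h22]; noncomm_ring
  · -- M M' = 1 + (something) L₁
    have h31 : M 1 * (g * P' k) = Q k * (g * N 0) + (-1:R)^k := by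
      rw [eM1, eN0]
      calc (Q k * M k + Q (k-1) * M (k+1)) * (g * P' k)
          = Q k * (M k * (g * P' k)) + Q (k-1) * (M (k+1) * (g * P' k)) := by noncomm_ring
        _ = Q k * (M k * (g * P' k)) + Q (k-1) * P' k := by rw [hfP']
        _ = Q k * (M k * (g * P' k)) + ((-1:R)^k + Q k * P' (k-1)) := by
            rw [sub_eq_iff_eq_add.mp c4k]
        _ = (Q k * ((g * M (k+1)) * (M k * (g * P' k)))
            + Q k * ((g * M (k+1)) * P' (k-1))) + (-1:R)^k := by
            rw [hgf, one_mul, one_mul]; abel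
        _ = Q k * (g * (M (k+1) * M k * g * P' k + M (k+1) * P' (k-1))) + (-1:R)^k := by
            noncomm_ring
    calc M 1 * ((-1:R)^k * g * P' k)
        = (-1:R)^k * (M 1 * (g * P' k)) := by
          rw [mul_assoc ((-1:R)^k) g (P' k), hmove (M 1) (g * P' k)]
      _ = (-1:R)^k * (Q k * (g * N 0)) + (-1:R)^k * (-1:R)^k := by
          rw [h31]; noncomm_ring
      _ = 1 + ((-1:R)^k * Q k * g) * N 0 := by rw [hε2]; noncomm_ring
end
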